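/- Let d ∈ ℕ, let λ ∈ ℂ with Im(λ) ≠ 0, let s ∈ ℝ with 2Re(λ) < s, let v ∈ ℂ^d, and let μ be a Borel measure on U_d := [0,∞)^d∖{0} with ∫_{U_d}‖z‖² μ(dz) < ∞ and μ({z ∈ U_d : ⟨v,z⟩ ≠ 0}) > 0. For w ≥ 0 and z ∈ U_d set g_z(w) := (Re(e^{−(s−2λ)w/2} ⟨v,z⟩), Im(e^{−(s−2λ)w/2} ⟨v,z⟩))^⊤ ∈ ℝ². Then the 2×2 real matrix ∫_0^∞ ∫_{U_d} g_z(w) g_z(w)^⊤ μ(dz) dw is strictly positive definite. -/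

import Mathlib

open MeasureTheory
open scoped ENNReal

/-- The pairing `⟨v,z⟩ = ∑ j, v j * z j` of `v ∈ ℂ^d` with `z ∈ ℝ^d`. -/
noncomputable def pairCV {d : ℕ} (v : Fin d → ℂ) (z : Fin d → ℝ) : ℂ :=
  ∑ j, v j * (z j : ℂ)

/-!
Write `ξ = e(w) p(z)` with `e(w) = exp (-(s - 2λ) w / 2)` and `p = ⟨v, ·⟩`. The entries
`(Re ξ)²`, `Re ξ Im ξ`, `(Im ξ)²` are real-linear in `(‖ξ‖², ξ²)`, and `ξ ↦ (‖ξ‖², ξ²)` is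
multiplicative, so the double integral factors: with `T = ∫‖e‖² ∫‖p‖²` and `S = ∫e² ∫p²` the matrix
is `½ [[T + Re S, Im S], [Im S, T - Re S]]`, which is positive definite as soon as `‖S‖ < T`.
Here `‖∫p²‖ ≤ ∫‖p‖²`, which is positive, while `‖∫e²‖ = 1 / ‖s - 2λ‖ < 1 / (s - 2 Re λ) = ∫‖e‖²`
exactly because `Im λ ≠ 0`.
-/

open Set

noncomputable def sqMoment (ξ : ℂ) : ℝ × ℂ := (‖ξ‖ ^ 2, ξ ^ 2)

lemma sqMoment_mul (a b : ℂ) : sqMoment (a * b) = sqMoment a * sqMoment b := by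
  simp [sqMoment, mul_pow]

section
variable {X Y : Type*} [MeasurableSpace X] [MeasurableSpace Y] {μ : Measure X} {ν : Measure Y}
  {f : X → ℂ}

lemma MeasureTheory.MemLp.integrable_sq_complex (hf : MemLp f 2 μ) :
    Integrable (fun x => f x ^ 2) μ :=
  (hf.integrable_mul hf).congr (.of_forall fun x => (sq (f x)).symm)

lemma MeasureTheory.MemLp.integrable_sqMoment (hf : MemLp f 2 μ) :
    Integrable (fun x => sqMoment (f x)) μ :=
  (hf.integrable_norm_pow two_ne_zero).prodMk hf.integrable_sq_complex

lemma integral_sqMoment (hf : MemLp f 2 μ) :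
    ∫ x, sqMoment (f x) ∂μ = (∫ x, ‖f x‖ ^ 2 ∂μ, ∫ x, f x ^ 2 ∂μ) :=
  integral_pair (hf.integrable_norm_pow two_ne_zero) hf.integrable_sq_complex

lemma integral_norm_sq_pos (hf : MemLp f 2 μ) (h : 0 < μ {x | f x ≠ 0}) :
    0 < ∫ x, ‖f x‖ ^ 2 ∂μ := by
  rw [integral_pos_iff_support_of_nonneg (fun _ => by positivity)
    (hf.integrable_norm_pow two_ne_zero)]
  convert h using 2
  ext x
  simp

lemma integral_integral_clm_sqMoment_mul {F : Type*} [NormedAddCommGroup F] [NormedSpace ℝ F]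
    [CompleteSpace F] (ℓ : ℝ × ℂ →L[ℝ] F) {e : Y → ℂ} {p : X → ℂ} (he : MemLp e 2 ν)
    (hp : MemLp p 2 μ) :
    ∫ y, ∫ x, ℓ (sqMoment (e y * p x)) ∂μ ∂ν
      = ℓ ((∫ y, sqMoment (e y) ∂ν) * ∫ x, sqMoment (p x) ∂μ) := by
  have hp' := hp.integrable_sqMoment
  have he' := he.integrable_sqMoment
  simp_rw [sqMoment_mul]
  calc ∫ y, ∫ x, ℓ (sqMoment (e y) * sqMoment (p x)) ∂μ ∂ν
      = ∫ y, ℓ (sqMoment (e y) * ∫ x, sqMoment (p x) ∂μ) ∂ν := by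
        congr 1 with y
        rw [← integral_const_mul_of_integrable hp', ℓ.integral_comp_comm (hp'.const_mul _)]
    _ = _ := by
        rw [← integral_mul_const_of_integrable he', ℓ.integral_comp_comm (he'.mul_const _)]

end

lemma posDef_of_norm_snd_lt {ω : ℝ × ℂ} (h : ‖ω.2‖ < ω.1) :
    Matrix.PosDef !![(ω.1 + ω.2.re) / 2, ω.2.im / 2; ω.2.im / 2, (ω.1 - ω.2.re) / 2] := by
  obtain ⟨r, ζ⟩ := ω
  rw [Matrix.posDef_iff_dotProduct_mulVec]
  refine ⟨by ext i j; fin_cases i <;> fin_cases j <;> rfl, fun x hx => ?_⟩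
  have hS : 0 < x 0 ^ 2 + x 1 ^ 2 := by
    contrapose! hx
    ext i; fin_cases i <;> simp <;> nlinarith [sq_nonneg (x 0), sq_nonneg (x 1)]
  have cauchy_schwarz :
      |ζ.re * (x 0 ^ 2 - x 1 ^ 2) + ζ.im * (2 * x 0 * x 1)| ≤ ‖ζ‖ * (x 0 ^ 2 + x 1 ^ 2) := by
    refine abs_le_of_sq_le_sq ?_ (by positivity)
    rw [mul_pow, Complex.sq_norm, Complex.normSq_apply]
    nlinarith [sq_nonneg (ζ.re * (2 * x 0 * x 1) - ζ.im * (x 0 ^ 2 - x 1 ^ 2))]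
  simp only [dotProduct, Pi.star_apply, star_trivial, Matrix.mulVec, Matrix.of_apply,
    Matrix.cons_val', Matrix.cons_val_fin_one, Fin.sum_univ_two, Fin.isValue,
    Matrix.cons_val_zero, Matrix.cons_val_one]
  nlinarith [abs_le.mp cauchy_schwarz, mul_lt_mul_of_pos_right h hS]

namespace Complex

lemma re_sq_eq_half_norm_sq_add_re_sq (ξ : ℂ) : ξ.re ^ 2 = (‖ξ‖ ^ 2 + (ξ ^ 2).re) / 2 := by
  rw [Complex.sq_norm, normSq_apply, sq ξ, mul_re]; ring

lemma re_mul_im_eq_half_im_sq (ξ : ℂ) : ξ.re * ξ.im = (ξ ^ 2).im / 2 := by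
  rw [sq, mul_im]; ring

lemma im_sq_eq_half_norm_sq_sub_re_sq (ξ : ℂ) : ξ.im ^ 2 = (‖ξ‖ ^ 2 - (ξ ^ 2).re) / 2 := by
  rw [Complex.sq_norm, normSq_apply, sq ξ, mul_re]; ring

end Complex

section
variable {X Y : Type*} [MeasurableSpace X] [MeasurableSpace Y] {μ : Measure X} {ν : Measure Y}
  {e : Y → ℂ} {p : X → ℂ}

open ContinuousLinearMap Complex in
lemma posDef_integral_integral_mul (he : MemLp e 2 ν) (hp : MemLp p 2 μ)
    (he_phase : ‖∫ y, e y ^ 2 ∂ν‖ < ∫ y, ‖e y‖ ^ 2 ∂ν) (hp_pos : 0 < ∫ x, ‖p x‖ ^ 2 ∂μ) :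
    Matrix.PosDef
      !![∫ y, ∫ x, (e y * p x).re ^ 2 ∂μ ∂ν, ∫ y, ∫ x, (e y * p x).re * (e y * p x).im ∂μ ∂ν;
         ∫ y, ∫ x, (e y * p x).re * (e y * p x).im ∂μ ∂ν, ∫ y, ∫ x, (e y * p x).im ^ 2 ∂μ ∂ν] := by
  have key := fun ℓ : ℝ × ℂ →L[ℝ] ℝ => integral_integral_clm_sqMoment_mul ℓ he hp
  obtain ⟨ω, hω⟩ : ∃ ω, (∫ y, sqMoment (e y) ∂ν) * ∫ x, sqMoment (p x) ∂μ = ω := ⟨_, rfl⟩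
  simp only [hω] at key
  have h11 : ∫ y, ∫ x, (e y * p x).re ^ 2 ∂μ ∂ν = (ω.1 + ω.2.re) / 2 := by
    simp_rw [re_sq_eq_half_norm_sq_add_re_sq]
    simpa [sqMoment, div_eq_inv_mul, mul_add] using
      key ((2⁻¹ : ℝ) • (fst ℝ ℝ ℂ + reCLM ∘L snd ℝ ℝ ℂ))
  have h12 : ∫ y, ∫ x, (e y * p x).re * (e y * p x).im ∂μ ∂ν = ω.2.im / 2 := by
    simp_rw [re_mul_im_eq_half_im_sq]
    simpa [sqMoment, div_eq_inv_mul] using key ((2⁻¹ : ℝ) • (imCLM ∘L snd ℝ ℝ ℂ))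
  have h22 : ∫ y, ∫ x, (e y * p x).im ^ 2 ∂μ ∂ν = (ω.1 - ω.2.re) / 2 := by
    simp_rw [im_sq_eq_half_norm_sq_sub_re_sq]
    simpa [sqMoment, div_eq_inv_mul, mul_sub] using
      key ((2⁻¹ : ℝ) • (fst ℝ ℝ ℂ - reCLM ∘L snd ℝ ℝ ℂ))
  rw [h11, h12, h22]
  refine posDef_of_norm_snd_lt ?_
  rw [← hω, integral_sqMoment he, integral_sqMoment hp]
  calc ‖(∫ y, e y ^ 2 ∂ν) * ∫ x, p x ^ 2 ∂μ‖
      ≤ ‖∫ y, e y ^ 2 ∂ν‖ * ∫ x, ‖p x‖ ^ 2 ∂μ := by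
        rw [norm_mul]
        gcongr
        exact (norm_integral_le_integral_norm _).trans_eq (by simp_rw [norm_pow])
    _ < (∫ y, ‖e y‖ ^ 2 ∂ν) * ∫ x, ‖p x‖ ^ 2 ∂μ := by gcongr
end

section
variable {β : ℂ}

lemma exp_neg_mul_half_sq (w : ℝ) :
    Complex.exp (-(β * w / 2)) ^ 2 = Complex.exp (-β * w) := by
  rw [← Complex.exp_nat_mul]; ring_nf

lemma norm_exp_neg_mul_half_sq (w : ℝ) :
    ‖Complex.exp (-(β * w / 2))‖ ^ 2 = Real.exp (-β.re * w) := by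
  rw [Complex.norm_exp, ← Real.exp_nat_mul]
  congr 1
  simp only [Complex.neg_re, Complex.div_ofNat_re, Complex.mul_re, Complex.ofReal_re,
    Complex.ofReal_im, mul_zero, sub_zero]
  ring

lemma memLp_exp_neg_mul_half (hβ : 0 < β.re) :
    MemLp (fun w : ℝ => Complex.exp (-(β * w / 2))) 2 (volume.restrict (Ioi 0)) := by
  refine (memLp_two_iff_integrable_sq_norm (by fun_prop)).2 ?_
  simp_rw [norm_exp_neg_mul_half_sq]
  exact exp_neg_integrableOn_Ioi 0 hβ

lemma norm_integral_exp_neg_mul_half_sq_lt (hre : 0 < β.re) (him : β.im ≠ 0) :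
    ‖∫ w in Ioi (0 : ℝ), Complex.exp (-(β * w / 2)) ^ 2‖
      < ∫ w in Ioi (0 : ℝ), ‖Complex.exp (-(β * w / 2))‖ ^ 2 := by
  simp_rw [exp_neg_mul_half_sq, norm_exp_neg_mul_half_sq]
  rw [integral_exp_mul_complex_Ioi (by simpa using hre),
    integral_exp_mul_Ioi (by simpa using hre)]
  have hre_lt : β.re < ‖β‖ := (le_abs_self _).trans_lt (Complex.abs_re_lt_norm.2 him)
  simpa using (inv_lt_inv₀ (hre.trans hre_lt) hre).2 hre_lt
end

lemma continuous_pairCV {d : ℕ} (v : Fin d → ℂ) : Continuous (pairCV v) := by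
  unfold pairCV; fun_prop

lemma norm_pairCV_le {d : ℕ} (v : Fin d → ℂ) (z : Fin d → ℝ) :
    ‖pairCV v z‖ ≤ (∑ j, ‖v j‖) * ‖z‖ := by
  rw [pairCV, Finset.sum_mul]
  refine (norm_sum_le _ _).trans (Finset.sum_le_sum fun j _ => ?_)
  rw [norm_mul, Complex.norm_real]
  exact mul_le_mul_of_nonneg_left (norm_le_pi_norm z j) (norm_nonneg _)

lemma memLp_id_two_of_lintegral_sq_lt_top {E : Type*} [NormedAddCommGroup E] [MeasurableSpace E]
    [OpensMeasurableSpace E] [SecondCountableTopology E] {μ : Measure E}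
    (h : ∫⁻ z, (‖z‖₊ : ℝ≥0∞) ^ 2 ∂μ < ⊤) : MemLp id 2 μ := by
  refine (memLp_two_iff_integrable_sq_norm aestronglyMeasurable_id).2 ⟨by fun_prop, ?_⟩
  simpa [HasFiniteIntegral, enorm_pow, enorm_eq_nnnorm] using h

lemma memLp_pairCV {d : ℕ} (v : Fin d → ℂ) {μ : Measure (Fin d → ℝ)} (hμ : MemLp id 2 μ) :
    MemLp (pairCV v) 2 μ :=
  hμ.of_le_mul (continuous_pairCV v).aestronglyMeasurable (.of_forall (norm_pairCV_le v))

theorem stmt9_general (d : ℕ) (lam : ℂ) (him : lam.im ≠ 0) (s : ℝ) (hs : 2 * lam.re < s)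
    (v : Fin d → ℂ) (μ : Measure (Fin d → ℝ))
    (hmom : ∫⁻ z, (‖z‖₊ : ℝ≥0∞) ^ 2 ∂μ < ⊤)
    (hpos : 0 < μ {z | ((∀ i, 0 ≤ z i) ∧ z ≠ 0) ∧ pairCV v z ≠ 0}) :
    Matrix.PosDef
      !![∫ w in Set.Ioi (0:ℝ),
           ∫ z, ((Complex.exp (-(((s : ℂ) - 2 * lam) * w / 2)) * pairCV v z).re) ^ 2 ∂μ,
         ∫ w in Set.Ioi (0:ℝ),
           ∫ z, (Complex.exp (-(((s : ℂ) - 2 * lam) * w / 2)) * pairCV v z).re *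
             (Complex.exp (-(((s : ℂ) - 2 * lam) * w / 2)) * pairCV v z).im ∂μ;
         ∫ w in Set.Ioi (0:ℝ),
           ∫ z, (Complex.exp (-(((s : ℂ) - 2 * lam) * w / 2)) * pairCV v z).re *
             (Complex.exp (-(((s : ℂ) - 2 * lam) * w / 2)) * pairCV v z).im ∂μ,
         ∫ w in Set.Ioi (0:ℝ),
           ∫ z, ((Complex.exp (-(((s : ℂ) - 2 * lam) * w / 2)) * pairCV v z).im) ^ 2 ∂μ] := by
  have hβre : 0 < ((s : ℂ) - 2 * lam).re := by simpa using hs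
  have hβim : ((s : ℂ) - 2 * lam).im ≠ 0 := by simpa using him
  have hp : MemLp (pairCV v) 2 μ := memLp_pairCV v (memLp_id_two_of_lintegral_sq_lt_top hmom)
  exact posDef_integral_integral_mul (memLp_exp_neg_mul_half hβre) hp
    (norm_integral_exp_neg_mul_half_sq_lt hβre hβim)
    (integral_norm_sq_pos hp (hpos.trans_le (measure_mono fun z hz => hz.2)))

/-- Let `λ ∈ ℂ` with `Im λ ≠ 0`, `s ∈ ℝ` with `2 Re λ < s`, `v ∈ ℂ^d`, and let `μ` be a Borel
measure on `U_d = [0,∞)^d \ {0}` with `∫ ‖z‖² dμ < ∞` and `μ{z ∈ U_d : ⟨v,z⟩ ≠ 0} > 0`.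
With `g_z(w) = (Re(e^{-(s-2λ)w/2} ⟨v,z⟩), Im(e^{-(s-2λ)w/2} ⟨v,z⟩))ᵀ`, the matrix
`∫_0^∞ ∫_{U_d} g_z(w) g_z(w)ᵀ μ(dz) dw` is strictly positive definite. -/
theorem stmt9 (d : ℕ) (lam : ℂ) (him : lam.im ≠ 0) (s : ℝ) (hs : 2 * lam.re < s)
    (v : Fin d → ℂ) (μ : Measure (Fin d → ℝ))
    (hsupp : μ {z | ¬ ((∀ i, 0 ≤ z i) ∧ z ≠ 0)} = 0)
    (hmom : ∫⁻ z, (‖z‖₊ : ℝ≥0∞) ^ 2 ∂μ < ⊤)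
    (hpos : 0 < μ {z | ((∀ i, 0 ≤ z i) ∧ z ≠ 0) ∧ pairCV v z ≠ 0}) :
    Matrix.PosDef
      !![∫ w in Set.Ioi (0:ℝ),
           ∫ z, ((Complex.exp (-(((s : ℂ) - 2 * lam) * w / 2)) * pairCV v z).re) ^ 2 ∂μ,
         ∫ w in Set.Ioi (0:ℝ),
           ∫ z, (Complex.exp (-(((s : ℂ) - 2 * lam) * w / 2)) * pairCV v z).re *
             (Complex.exp (-(((s : ℂ) - 2 * lam) * w / 2)) * pairCV v z).im ∂μ;
         ∫ w in Set.Ioi (0:ℝ),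
           ∫ z, (Complex.exp (-(((s : ℂ) - 2 * lam) * w / 2)) * pairCV v z).re *
             (Complex.exp (-(((s : ℂ) - 2 * lam) * w / 2)) * pairCV v z).im ∂μ,
         ∫ w in Set.Ioi (0:ℝ),
           ∫ z, ((Complex.exp (-(((s : ℂ) - 2 * lam) * w / 2)) * pairCV v z).im) ^ 2 ∂μ] :=
  stmt9_general d lam him s hs v μ hmom hpos
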